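/- Define Φ_{η,c}(r) = r⁻¹ for 0 < r ≤ e^c and Φ_{η,c}(r) = (log r)^{−η} for r > e^c, where 0 < η < 1/4 and c > 0. Suppose positive reals X, C, A satisfy X ≤ e^{cs}·C + s^{−η}·A for all s ≥ 1, and A > 0, C > 0. Then there is a constant κ > 0 depending only on η and c (not on X, C, A) such that X ≤ κ · Φ_{η,c}(A/C) · A. -/

import Mathlib

/-!
Take `s = 1` when `r = A / C ≤ e^{2c}`, and `s = log r / (2c)` otherwise. In the second case
`e^{cs} C = A / √r`, and `√r = e^{(log r)/2}` dominates `(log r)^η` because `η ≤ 1`, so both terms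
of the interpolation inequality are `O((log r)^{-η} A)`.
-/

/-- `Φ_{η,c}(r) = r⁻¹` on `(0, e^c]` and `(log r)^{−η}` on `(e^c, ∞)`. -/
noncomputable def Phi (η c r : ℝ) : ℝ :=
  if r ≤ Real.exp c then r⁻¹ else (Real.log r) ^ (-η)

open Real

lemma Phi_of_le_exp {η c r : ℝ} (hr : r ≤ exp c) : Phi η c r = r⁻¹ := if_pos hr

lemma Phi_of_exp_lt {η c r : ℝ} (hr : exp c < r) : Phi η c r = log r ^ (-η) := if_neg hr.not_ge

lemma Phi_pos {η c r : ℝ} (hc : 0 ≤ c) (hr : 0 < r) : 0 < Phi η c r := by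
  rcases le_or_gt r (exp c) with h | h
  · rw [Phi_of_le_exp h]
    exact inv_pos.mpr hr
  · rw [Phi_of_exp_lt h]
    exact rpow_pos_of_pos (hc.trans_lt ((lt_log_iff_exp_lt hr).mpr h)) _

lemma Real.rpow_le_one_add {x η : ℝ} (hx : 0 ≤ x) (hη₀ : 0 ≤ η) (hη₁ : η ≤ 1) :
    x ^ η ≤ 1 + x := by
  rcases le_total x 1 with h | h
  · linarith [rpow_le_one hx h hη₀]
  · linarith [rpow_le_self_of_one_le h hη₁]

lemma Real.exp_half_inv_le_two_mul_rpow_neg {x η : ℝ} (hx : 0 < x) (hη₀ : 0 ≤ η) (hη₁ : η ≤ 1) :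
    (exp (x / 2))⁻¹ ≤ 2 * x ^ (-η) := by
  have hxη : 0 < x ^ η := rpow_pos_of_pos hx η
  rw [rpow_neg hx.le, inv_le_comm₀ (exp_pos _) (by positivity), mul_inv, inv_inv]
  linarith [rpow_le_one_add hx.le hη₀ hη₁, add_one_le_exp (x / 2)]

/-- The interpolation inequality of Theorem 1.1. -/
def InterpolationIneq (η c X C A : ℝ) : Prop :=
  ∀ s : ℝ, 1 ≤ s → X ≤ exp (c * s) * C + s ^ (-η) * A

namespace InterpolationIneq

variable {η c X C A : ℝ}

lemma le_exp_mul_add (h : InterpolationIneq η c X C A) : X ≤ exp c * C + A := by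
  simpa using h 1 le_rfl

lemma le_of_le_exp (h : InterpolationIneq η c X C A) (hC : 0 < C) (hA : 0 < A)
    (hr : A / C ≤ exp c) : X ≤ 2 * exp c * (Phi η c (A / C) * A) := by
  have hAC : A ≤ exp c * C := (div_le_iff₀ hC).mp hr
  have hΦ : Phi η c (A / C) * A = C := by
    rw [Phi_of_le_exp hr]
    field_simp
  rw [hΦ]
  linarith [h.le_exp_mul_add]

lemma le_of_log_le (h : InterpolationIneq η c X C A) (hc : 0 ≤ c) (hη₀ : 0 ≤ η) (hC : 0 < C)
    (hr : exp c < A / C) (hL : log (A / C) ≤ 2 * c) :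
    X ≤ 2 * (2 * c) ^ η * (log (A / C) ^ (-η) * A) := by
  have hL₀ : 0 < log (A / C) := hc.trans_lt ((lt_log_iff_exp_lt ((exp_pos c).trans hr)).mpr hr)
  have hAC : exp c * C < A := (lt_div_iff₀ hC).mp hr
  have hA : 0 < A := (mul_pos (exp_pos c) hC).trans hAC
  have hone : 1 ≤ (2 * c) ^ η * log (A / C) ^ (-η) := by
    rw [rpow_neg hL₀.le, ← div_eq_mul_inv, one_le_div (rpow_pos_of_pos hL₀ η)]
    exact rpow_le_rpow hL₀.le hL hη₀
  nlinarith [h.le_exp_mul_add, mul_le_mul_of_nonneg_right hone hA.le]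

lemma le_of_two_mul_lt_log (h : InterpolationIneq η c X C A) (hc : 0 < c) (hη₀ : 0 ≤ η)
    (hη₁ : η ≤ 1) (hC : 0 < C) (hA : 0 < A) (hL : 2 * c < log (A / C)) :
    X ≤ ((2 * c) ^ η + 2) * (log (A / C) ^ (-η) * A) := by
  set L := log (A / C) with hL_def
  have hL₀ : 0 < L := by linarith
  have hs : 1 ≤ L / (2 * c) := (one_le_div (by positivity)).mpr hL.le
  have hsq : exp (L / 2) * exp (L / 2) = A / C := by
    rw [← exp_add, add_halves, hL_def, exp_log (by positivity)]
  have hexp : exp (c * (L / (2 * c))) * C = (exp (L / 2))⁻¹ * A := by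
    rw [show c * (L / (2 * c)) = L / 2 by field_simp, eq_inv_mul_iff_mul_eq₀ (exp_pos _).ne',
      ← mul_assoc, hsq, div_mul_cancel₀ A hC.ne']
  have hpow : (L / (2 * c)) ^ (-η) = (2 * c) ^ η * L ^ (-η) := by
    rw [div_rpow hL₀.le (by positivity), rpow_neg (by positivity : (0 : ℝ) ≤ 2 * c)]
    field_simp
  calc X ≤ exp (c * (L / (2 * c))) * C + (L / (2 * c)) ^ (-η) * A := h _ hs
    _ = (exp (L / 2))⁻¹ * A + (2 * c) ^ η * L ^ (-η) * A := by rw [hexp, hpow]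
    _ ≤ 2 * L ^ (-η) * A + (2 * c) ^ η * L ^ (-η) * A := by
      gcongr
      exact exp_half_inv_le_two_mul_rpow_neg hL₀ hη₀ hη₁
    _ = ((2 * c) ^ η + 2) * (L ^ (-η) * A) := by ring

lemma le_of_exp_lt (h : InterpolationIneq η c X C A) (hc : 0 < c) (hη₀ : 0 ≤ η)
    (hη₁ : η ≤ 1) (hC : 0 < C) (hA : 0 < A) (hr : exp c < A / C) :
    X ≤ 2 * ((2 * c) ^ η + 1) * (Phi η c (A / C) * A) := by
  have hL₀ : 0 < log (A / C) := hc.trans ((lt_log_iff_exp_lt (div_pos hA hC)).mpr hr)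
  rw [Phi_of_exp_lt hr]
  rcases le_or_gt (log (A / C)) (2 * c) with hL | hL
  · refine (h.le_of_log_le hc.le hη₀ hC hr hL).trans ?_
    gcongr
    linarith
  · refine (h.le_of_two_mul_lt_log hc hη₀ hη₁ hC hA hL).trans ?_
    gcongr
    linarith [rpow_nonneg (by positivity : (0 : ℝ) ≤ 2 * c) η]

end InterpolationIneq

/-- Minimization over `s ≥ 1` of the interpolation inequality
`X ≤ e^{cs}C + s^{−η}A` yields `X ≤ κ · Φ_{η,c}(A/C) · A`. -/
theorem log_stability_from_interpolation
    (η c : ℝ) (hη₀ : 0 < η) (hη₁ : η < 1 / 4) (hc : 0 < c) :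
    ∃ κ > 0, ∀ X C A : ℝ, 0 < X → 0 < C → 0 < A →
      (∀ s : ℝ, 1 ≤ s → X ≤ Real.exp (c * s) * C + s ^ (-η) * A) →
      X ≤ κ * Phi η c (A / C) * A := by
  refine ⟨max (2 * exp c) (2 * ((2 * c) ^ η + 1)), by positivity, ?_⟩
  intro X C A _ hC hA h
  have hΦ : 0 ≤ Phi η c (A / C) * A := (mul_pos (Phi_pos hc.le (div_pos hA hC)) hA).le
  rw [mul_assoc]
  rcases le_or_gt (A / C) (exp c) with hr | hr
  · refine (InterpolationIneq.le_of_le_exp h hC hA hr).trans ?_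
    gcongr
    exact le_max_left _ _
  · refine (InterpolationIneq.le_of_exp_lt h hc hη₀.le (by linarith) hC hA hr).trans ?_
    gcongr
    exact le_max_right _ _
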